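/- For a fixed m, the function g(S) = E[min{Σ_{v∈S} X_v, N}], where X_v are independent Bernoulli random variables, is monotone and submodular on subsets of V. -/
import Mathlib


/-- Expectation of `h` applied to the number of successes among independent Bernoulli
trials with success probabilities `p v`, `v ∈ S`. -/
noncomputable def expTrunc {ι : Type*} [DecidableEq ι] (p : ι → ℝ) (S : Finset ι)
    (h : ℕ → ℝ) : ℝ :=
  ∑ T ∈ S.powerset, ((∏ v ∈ T, p v) * ∏ v ∈ S \ T, (1 - p v)) * h T.card

section aux

variable {ι : Type*} [DecidableEq ι] (p : ι → ℝ)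

lemma weight_nonneg (hp : ∀ v, 0 ≤ p v ∧ p v ≤ 1) (S T : Finset ι) :
    0 ≤ (∏ v ∈ T, p v) * ∏ v ∈ S \ T, (1 - p v) :=
  mul_nonneg (Finset.prod_nonneg fun v _ => (hp v).1)
    (Finset.prod_nonneg fun v _ => by linarith [(hp v).2])

lemma expTrunc_mono_fn (hp : ∀ v, 0 ≤ p v ∧ p v ≤ 1) (S : Finset ι) {f g : ℕ → ℝ}
    (h : ∀ n, f n ≤ g n) : expTrunc p S f ≤ expTrunc p S g :=
  Finset.sum_le_sum fun T _ =>
    mul_le_mul_of_nonneg_left (h T.card) (weight_nonneg p hp S T)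

lemma expTrunc_nonneg (hp : ∀ v, 0 ≤ p v ∧ p v ≤ 1) (S : Finset ι) {f : ℕ → ℝ}
    (h : ∀ n, 0 ≤ f n) : 0 ≤ expTrunc p S f :=
  Finset.sum_nonneg fun T _ => mul_nonneg (weight_nonneg p hp S T) (h T.card)

lemma expTrunc_insert (S : Finset ι) {v : ι} (hv : v ∉ S) (h : ℕ → ℝ) :
    expTrunc p (insert v S) h
      = expTrunc p S (fun n => p v * h (n + 1) + (1 - p v) * h n) := by
  unfold expTrunc
  rw [Finset.sum_powerset_insert hv, ← Finset.sum_add_distrib]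
  refine Finset.sum_congr rfl fun T hT => ?_
  rw [Finset.mem_powerset] at hT
  have hvT : v ∉ T := fun h => hv (hT h)
  have hvST : v ∉ S \ T := fun h => hv (Finset.mem_sdiff.mp h).1
  have h1 : insert v S \ T = insert v (S \ T) := Finset.insert_sdiff_of_notMem _ hvT
  have h2 : insert v S \ insert v T = S \ T := by
    ext x
    simp only [Finset.mem_sdiff, Finset.mem_insert]
    constructor
    · rintro ⟨hx1 | hx1, hx2⟩
      · exact absurd (Or.inl hx1) hx2
      · exact ⟨hx1, fun hxT => hx2 (Or.inr hxT)⟩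
    · rintro ⟨hx1, hx2⟩
      exact ⟨Or.inr hx1, fun h => h.elim (fun h => hv (h ▸ hx1)) hx2⟩
  rw [h1, h2, Finset.prod_insert hvST, Finset.prod_insert hvT,
    Finset.card_insert_of_notMem hvT]
  ring

lemma expTrunc_marg (S : Finset ι) {v : ι} (hv : v ∉ S) (h : ℕ → ℝ) :
    expTrunc p (insert v S) h - expTrunc p S h
      = p v * expTrunc p S (fun n => h (n + 1) - h n) := by
  rw [expTrunc_insert p S hv]
  unfold expTrunc
  rw [Finset.mul_sum, ← Finset.sum_sub_distrib]
  exact Finset.sum_congr rfl fun T _ => by ring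

lemma expTrunc_union_le (hp : ∀ v, 0 ≤ p v ∧ p v ≤ 1) {f : ℕ → ℝ}
    (hf : ∀ n, f (n + 1) ≤ f n) :
    ∀ (A S : Finset ι), Disjoint A S → expTrunc p (A ∪ S) f ≤ expTrunc p S f := by
  intro A
  induction A using Finset.induction_on with
  | empty => simp
  | @insert a A ha ih =>
      intro S hdis
      have hdis' : Disjoint A S := (Finset.disjoint_insert_left.mp hdis).2
      have haS : a ∉ S := (Finset.disjoint_insert_left.mp hdis).1
      have haAS : a ∉ A ∪ S := by simp [ha, haS]
      have h1 : insert a A ∪ S = insert a (A ∪ S) := by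
        simp [Finset.insert_union]
      rw [h1, expTrunc_insert p _ haAS]
      calc expTrunc p (A ∪ S) (fun n => p a * f (n + 1) + (1 - p a) * f n)
          ≤ expTrunc p (A ∪ S) f := by
            refine expTrunc_mono_fn p hp _ fun n => ?_
            have h2 := hf n
            have h3 := (hp a).1
            nlinarith
        _ ≤ expTrunc p S f := ih S hdis'

lemma expTrunc_le_union (hp : ∀ v, 0 ≤ p v ∧ p v ≤ 1) {f : ℕ → ℝ}
    (hf : ∀ n, f n ≤ f (n + 1)) :
    ∀ (A S : Finset ι), Disjoint A S → expTrunc p S f ≤ expTrunc p (A ∪ S) f := by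
  intro A
  induction A using Finset.induction_on with
  | empty => simp
  | @insert a A ha ih =>
      intro S hdis
      have hdis' : Disjoint A S := (Finset.disjoint_insert_left.mp hdis).2
      have haS : a ∉ S := (Finset.disjoint_insert_left.mp hdis).1
      have haAS : a ∉ A ∪ S := by simp [ha, haS]
      have h1 : insert a A ∪ S = insert a (A ∪ S) := by
        simp [Finset.insert_union]
      rw [h1]
      have hmarg := expTrunc_marg p (A ∪ S) haAS f
      have hnn : 0 ≤ p a * expTrunc p (A ∪ S) (fun n => f (n + 1) - f n) :=
        mul_nonneg (hp a).1
          (expTrunc_nonneg p hp _ fun n => by linarith [hf n])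
      have := ih S hdis'
      linarith

end aux

/-- for a fixed genotype `m`, `g(S) = E[min{∑_{v∈S} X_v, N}]` (with `X_v`
independent Bernoulli of parameters `p v`) is monotone and submodular on subsets of `V`. -/
theorem g_monotone_submodular {ι : Type*} [DecidableEq ι] (V : Finset ι)
    (p : ι → ℝ) (hp : ∀ v, 0 ≤ p v ∧ p v ≤ 1) (N : ℕ)
    (g : Finset ι → ℝ)
    (hg : ∀ S : Finset ι, g S = expTrunc p S (fun y => min (y : ℝ) (N : ℝ))) :
    (∀ X Y : Finset ι, X ⊆ Y → Y ⊆ V → g X ≤ g Y) ∧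
    (∀ X Y : Finset ι, X ⊆ Y → Y ⊆ V → ∀ v ∈ V, v ∉ Y →
      g (insert v Y) - g Y ≤ g (insert v X) - g X) := by
  set h : ℕ → ℝ := fun y => min (y : ℝ) (N : ℝ) with hh
  have hdelta : ∀ n : ℕ, h (n + 1) - h n = if n < N then 1 else 0 := by
    intro n
    simp only [hh]
    rcases lt_or_ge n N with hn | hn
    · have h1 : (n : ℝ) ≤ N := by exact_mod_cast hn.le
      have h2 : ((n + 1 : ℕ) : ℝ) ≤ N := by exact_mod_cast hn
      rw [min_eq_left h1, min_eq_left h2, if_pos hn]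
      push_cast; ring
    · have h1 : (N : ℝ) ≤ n := by exact_mod_cast hn
      have h2 : (N : ℝ) ≤ ((n + 1 : ℕ) : ℝ) := by push_cast; linarith
      rw [min_eq_right h1, min_eq_right h2, if_neg (not_lt.mpr hn)]
      ring
  have hmono_fn : ∀ n : ℕ, h n ≤ h (n + 1) := by
    intro n
    have := hdelta n
    split_ifs at this <;> linarith
  have hanti : ∀ n : ℕ, (fun n => h (n + 1) - h n) (n + 1) ≤ (fun n => h (n + 1) - h n) n := by
    intro n
    simp only
    rw [hdelta, hdelta]
    split_ifs <;> norm_num <;> omega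
  constructor
  · intro X Y hXY _
    rw [hg X, hg Y]
    have hY : Y = (Y \ X) ∪ X := (Finset.sdiff_union_of_subset hXY).symm
    rw [hY]
    exact expTrunc_le_union p hp hmono_fn (Y \ X) X Finset.sdiff_disjoint
  · intro X Y hXY _ v _ hvY
    have hvX : v ∉ X := fun hx => hvY (hXY hx)
    rw [hg (insert v Y), hg Y, hg (insert v X), hg X,
      expTrunc_marg p Y hvY h, expTrunc_marg p X hvX h]
    refine mul_le_mul_of_nonneg_left ?_ (hp v).1
    have hY : Y = (Y \ X) ∪ X := (Finset.sdiff_union_of_subset hXY).symm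
    rw [hY]
    exact expTrunc_union_le p hp hanti (Y \ X) X Finset.sdiff_disjoint
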